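/- For every integer n ≥ 4, the opposing-kings game digraph G(K(1,n)) on the 1×n strip has metric dimension 3 with respect to signed distance; in particular, no set of two vertices resolves it. -/

import Mathlib

/-- `StepsTo R m u v` : there is a directed walk of length `m` from `u` to `v`. -/
def StepsTo {V : Type*} (R : V → V → Prop) : ℕ → V → V → Prop
  | 0 => fun u v => u = v
  | (m + 1) => fun u v => ∃ w, R u w ∧ StepsTo R m w v

/-- Directed distance: length of a shortest directed path (`⊤` = ∞ if none exists). -/
noncomputable def ddist {V : Type*} (R : V → V → Prop) (u v : V) : ℕ∞ :=
  sInf ((fun m : ℕ => (m : ℕ∞)) '' {m : ℕ | StepsTo R m u v})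

/-- Signed distance `d±(u,v)`: `d(u,v)` if a `u→v` path exists and `d(u,v) ≤ d(v,u)`;
`-d(v,u)` if a `v→u` path exists and `d(v,u) < d(u,v)`; `⊤` if neither path exists. -/
noncomputable def sdist {V : Type*} (R : V → V → Prop) (u v : V) : WithTop ℤ :=
  if ddist R u v ≤ ddist R v u then (ddist R u v).map (fun m : ℕ => (m : ℤ))
  else (ddist R v u).map (fun m : ℕ => (-(m : ℤ)))

/-- `S` resolves the digraph with arc relation `R` (w.r.t. signed distance). -/
def Resolves {V : Type*} (R : V → V → Prop) (S : Set V) : Prop :=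
  ∀ u v : V, (∀ s ∈ S, sdist R s u = sdist R s v) → u = v

/-- Metric dimension of the digraph with arc relation `R` (w.r.t. signed distance). -/
noncomputable def metricDim {V : Type*} (R : V → V → Prop) : ℕ :=
  sInf {k : ℕ | ∃ S : Finset V, S.card = k ∧ Resolves R ↑S}

/-- A position of the opposing-kings game on a `1 × n` strip: both kings on the board
(white king `K` on square `i`, black king `k` on square `j`), or only one king left. -/
inductive KingPos (n : ℕ) : Type
  | both : Fin n → Fin n → KingPos n
  | onlyK : Fin n → KingPos n
  | onlyk : Fin n → KingPos n
deriving DecidableEq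

/-- A position is valid when the two kings occupy distinct squares. -/
def KingPos.valid {n : ℕ} : KingPos n → Prop
  | .both i j => i ≠ j
  | .onlyK _ => True
  | .onlyk _ => True

/-- Two squares of the strip are adjacent (a king move). -/
def adjSq {n : ℕ} (i j : Fin n) : Prop := i.val + 1 = j.val ∨ j.val + 1 = i.val

/-- A move in the opposing-kings game on a `1 × n` strip: either king steps to an
adjacent square not occupied by the other king, and when the kings are adjacent either
one may capture the other (leaving a single king on the captured square). A lone king
moves to an adjacent square. -/
def KingMove {n : ℕ} : KingPos n → KingPos n → Prop
  | .both i j, .both i2 j2 =>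
      (adjSq i i2 ∧ j = j2 ∧ i2 ≠ j) ∨ (i = i2 ∧ adjSq j j2 ∧ j2 ≠ i)
  | .both i j, .onlyK m => adjSq i j ∧ m = j
  | .both i j, .onlyk m => adjSq i j ∧ m = i
  | .onlyK i, .onlyK i2 => adjSq i i2
  | .onlyk j, .onlyk j2 => adjSq j j2
  | _, _ => False

/-- Vertices of `G(K(1,n))`: the valid positions. -/
def KingV (n : ℕ) : Type := {p : KingPos n // p.valid}

/-- The arc relation of the game digraph `G(K(1,n))`. -/
def kingR (n : ℕ) (u v : KingV n) : Prop := KingMove u.1 v.1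


set_option maxHeartbeats 1000000

section generic
variable {V : Type*} {R : V → V → Prop} {u v : V}

theorem ddist_le {m : ℕ} (h : StepsTo R m u v) : ddist R u v ≤ m :=
  sInf_le ⟨m, h, rfl⟩

theorem ddist_eq {m : ℕ} (h1 : StepsTo R m u v)
    (h2 : ∀ k, StepsTo R k u v → m ≤ k) : ddist R u v = m := by
  refine le_antisymm (ddist_le h1) (le_sInf ?_)
  rintro x ⟨k, hk, rfl⟩
  show (m : ℕ∞) ≤ (k : ℕ∞)
  exact_mod_cast h2 k hk

theorem ddist_top (h : ∀ m, ¬ StepsTo R m u v) : ddist R u v = ⊤ := by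
  have : {m : ℕ | StepsTo R m u v} = ∅ := by
    ext m; simp [h m]
  rw [ddist, this]
  simp

theorem stepsTo_closed {P : V → Prop} (hP : ∀ a b, R a b → P a → P b) :
    ∀ m u v, StepsTo R m u v → P u → P v := by
  intro m
  induction m with
  | zero => intro u v h hu; cases h; exact hu
  | succ k ih => rintro u v ⟨w, hw, hs⟩ hu; exact ih w v hs (hP u w hw hu)

theorem sdist_eq_coe {m : ℕ} (h1 : ddist R u v = m) (h2 : ddist R u v ≤ ddist R v u) :
    sdist R u v = (m : ℤ) := by
  rw [sdist, if_pos h2, h1]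
  rfl

theorem sdist_eq_neg {m : ℕ} (h1 : ddist R u v = ⊤) (h2 : ddist R v u = m) :
    sdist R u v = ((-(m:ℤ) : ℤ) : WithTop ℤ) := by
  rw [sdist, if_neg, h2]
  · rfl
  · rw [h1, h2]
    simp

theorem sdist_top2 (h1 : ddist R u v = ⊤) (h2 : ddist R v u = ⊤) : sdist R u v = ⊤ := by
  rw [sdist, if_pos (by rw [h1, h2]), h1]
  rfl

theorem ddist_one (h : R u v) (hne : u ≠ v) : ddist R u v = 1 := by
  refine ddist_eq ⟨v, h, rfl⟩ ?_
  intro k hk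
  match k, hk with
  | 0, hk => exact absurd hk hne
  | (k+1), _ => exact Nat.le_add_left 1 k

theorem ddist_two (h : StepsTo R 2 u v) (hne : u ≠ v) (h1 : ¬ R u v) : ddist R u v = 2 := by
  refine ddist_eq h ?_
  intro k hk
  match k, hk with
  | 0, hk => exact absurd hk hne
  | 1, ⟨w, hw, hs⟩ => cases hs; exact absurd hw h1
  | (k+2), _ => exact Nat.le_add_left 2 k

theorem sdist_one (h1 : R u v) (h2 : R v u) (hne : u ≠ v) : sdist R u v = (1 : ℤ) :=
  sdist_eq_coe (ddist_one h1 hne) (by rw [ddist_one h1 hne, ddist_one h2 hne.symm])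

theorem sdist_two (h1 : StepsTo R 2 u v) (h2 : StepsTo R 2 v u) (hne : u ≠ v)
    (h3 : ¬ R u v) (h4 : ¬ R v u) : sdist R u v = (2 : ℤ) :=
  sdist_eq_coe (ddist_two h1 hne h3) (by rw [ddist_two h1 hne h3, ddist_two h2 hne.symm h4])

end generic
def nd (a b : ℕ) : ℕ := if a ≤ b then b - a else a - b

def DKf (a i j : ℕ) : ℕ :=
  if i < j then (if a ≤ i then j+1-a else if a ≤ j then j-i else a-i)
  else (if a ≤ j then i-a else if a < i then i-j else a-j+1)

theorem nd_comm (a b : ℕ) : nd a b = nd b a := by unfold nd; split_ifs <;> omega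

theorem nd_self (a : ℕ) : nd a a = 0 := by unfold nd; simp

theorem nd_lip {a b b2 : ℕ} (h : b+1 = b2 ∨ b2+1 = b) : nd a b ≤ nd a b2 + 1 := by
  unfold nd; split_ifs <;> omega

theorem nd_eq_zero {a b : ℕ} (h : nd a b = 0) : a = b := by
  unfold nd at h; split_ifs at h <;> omega

theorem DKf_pos {a i j : ℕ} (h : i ≠ j) : 1 ≤ DKf a i j := by
  unfold DKf; split_ifs <;> omega

theorem DKf_lip_K {a i j i2 : ℕ} (hij : i ≠ j) (h : i+1 = i2 ∨ i2+1 = i) (h2 : i2 ≠ j) :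
    DKf a i j ≤ DKf a i2 j + 1 := by
  unfold DKf; split_ifs <;> omega

theorem DKf_lip_k {a i j j2 : ℕ} (hij : i ≠ j) (h : j+1 = j2 ∨ j2+1 = j) (h2 : j2 ≠ i) :
    DKf a i j ≤ DKf a i j2 + 1 := by
  unfold DKf; split_ifs <;> omega

theorem DKf_lip_cap {a i j : ℕ} (h : i+1 = j ∨ j+1 = i) : DKf a i j ≤ nd a j + 1 := by
  unfold DKf nd; split_ifs <;> omega

theorem DKf0_eq {i j : ℕ} (h : i ≠ j) : DKf 0 i j = if i < j then j+1 else i := by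
  unfold DKf; split_ifs <;> omega

theorem DKflast_eq {n i j : ℕ} (h : i ≠ j) (hi : i < n) (hj : j < n) :
    DKf (n-1) i j = if i < j then n-1-i else n-j := by
  unfold DKf; split_ifs <;> omega



namespace KP
variable {n : ℕ}

def IsOk : KingPos n → Prop | .onlyk _ => True | _ => False
def IsK  : KingPos n → Prop | .onlyK _ => True | _ => False
def IsLone : KingPos n → Prop | .both _ _ => False | _ => True
def LoL : KingPos n → Prop | .both i j => i.val < j.val | _ => True
def RoL : KingPos n → Prop | .both i j => j.val < i.val | _ => True

def KV (a : Fin n) : KingV n := ⟨.onlyK a, trivial⟩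
def kv (a : Fin n) : KingV n := ⟨.onlyk a, trivial⟩
def bv (i j : Fin n) (h : i ≠ j) : KingV n := ⟨.both i j, h⟩

theorem vne {i j : Fin n} (h : i ≠ j) : i.val ≠ j.val := fun hh => h (Fin.ext hh)

def DKval (a : Fin n) : KingV n → ℕ := fun u =>
  match u.1 with
  | .both i j => DKf a.val i.val j.val
  | .onlyK b => nd a.val b.val
  | .onlyk _ => 0

theorem closed_IsOk : ∀ u v : KingV n, kingR n u v → IsOk u.1 → IsOk v.1 := by
  rintro ⟨p, hp⟩ ⟨q, hq⟩ h hu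
  cases p <;> cases q <;> first | exact hu.elim | exact h.elim | trivial

theorem closed_IsK : ∀ u v : KingV n, kingR n u v → IsK u.1 → IsK v.1 := by
  rintro ⟨p, hp⟩ ⟨q, hq⟩ h hu
  cases p <;> cases q <;> first | exact hu.elim | exact h.elim | trivial

theorem closed_IsLone : ∀ u v : KingV n, kingR n u v → IsLone u.1 → IsLone v.1 := by
  rintro ⟨p, hp⟩ ⟨q, hq⟩ h hu
  cases p <;> cases q <;> first | exact hu.elim | exact h.elim | trivial

theorem closed_LoL : ∀ u v : KingV n, kingR n u v → LoL u.1 → LoL v.1 := by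
  rintro ⟨p, hp⟩ ⟨q, hq⟩ h hu
  cases p with
  | both i j =>
    cases q with
    | both i2 j2 =>
      show i2.val < j2.val
      have hu' : i.val < j.val := hu
      rcases h with ⟨h1, h2, h3⟩ | ⟨h1, h2, h3⟩
      · cases h2; have := vne h3; rcases h1 with h1 | h1 <;> omega
      · cases h1; have := vne h3; rcases h2 with h2 | h2 <;> omega
    | onlyK _ => trivial
    | onlyk _ => trivial
  | onlyK b => cases q <;> first | exact h.elim | trivial
  | onlyk b => cases q <;> first | exact h.elim | trivial

theorem closed_RoL : ∀ u v : KingV n, kingR n u v → RoL u.1 → RoL v.1 := by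
  rintro ⟨p, hp⟩ ⟨q, hq⟩ h hu
  cases p with
  | both i j =>
    cases q with
    | both i2 j2 =>
      show j2.val < i2.val
      have hu' : j.val < i.val := hu
      rcases h with ⟨h1, h2, h3⟩ | ⟨h1, h2, h3⟩
      · cases h2; have := vne h3; rcases h1 with h1 | h1 <;> omega
      · cases h1; have := vne h3; rcases h2 with h2 | h2 <;> omega
    | onlyK _ => trivial
    | onlyk _ => trivial
  | onlyK b => cases q <;> first | exact h.elim | trivial
  | onlyk b => cases q <;> first | exact h.elim | trivial

theorem noPath {P : KingPos n → Prop} (hP : ∀ u v : KingV n, kingR n u v → P u.1 → P v.1)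
    {u v : KingV n} (hu : P u.1) (hv : ¬ P v.1) : ddist (kingR n) u v = ⊤ :=
  ddist_top (fun m hm => hv (stepsTo_closed hP m u v hm hu))

theorem DK_lip (a : Fin n) {u w : KingV n} (h : kingR n u w) (hw : ¬ IsOk w.1) :
    DKval a u ≤ DKval a w + 1 := by
  obtain ⟨p, hp⟩ := u; obtain ⟨q, hq⟩ := w
  cases p with
  | both i j =>
    have hij := vne hp
    cases q with
    | both i2 j2 =>
      have hij2 := vne hq
      rcases h with ⟨h1, h2, h3⟩ | ⟨h1, h2, h3⟩
      · cases h2; exact DKf_lip_K hij h1 (vne h3)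
      · cases h1; exact DKf_lip_k hij h2 (vne h3)
    | onlyK m =>
      obtain ⟨h1, h2⟩ := h; cases h2; exact DKf_lip_cap h1
    | onlyk m => exact (hw trivial).elim
  | onlyK b =>
    cases q with
    | both i2 j2 => exact h.elim
    | onlyK b2 => exact nd_lip h
    | onlyk _ => exact h.elim
  | onlyk b => exact Nat.zero_le _

theorem DK_dec (a : Fin n) (u : KingV n) (hu : ¬ IsOk u.1) (hne : u ≠ KV a) :
    ∃ w : KingV n, kingR n u w ∧ ¬ IsOk w.1 ∧ DKval a w + 1 = DKval a u := by
  obtain ⟨p, hp⟩ := u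
  cases p with
  | onlyk b => exact (hu trivial).elim
  | onlyK b =>
    have hba : b.val ≠ a.val := by
      intro hh
      apply hne
      have : b = a := Fin.ext hh
      subst this
      rfl
    rcases Nat.lt_or_ge b.val a.val with hlt | hge
    · refine ⟨KV ⟨b.val+1, by omega⟩, Or.inl rfl, fun hh => hh, ?_⟩
      show nd a.val (b.val+1) + 1 = nd a.val b.val
      unfold nd; split_ifs <;> omega
    · refine ⟨KV ⟨b.val-1, by omega⟩, Or.inr (by simp; omega), fun hh => hh, ?_⟩
      show nd a.val (b.val-1) + 1 = nd a.val b.val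
      unfold nd; split_ifs <;> omega
  | both i j =>
    have hij := vne hp
    have hi := i.isLt
    have hj := j.isLt
    have ha := a.isLt
    rcases Nat.lt_or_ge i.val j.val with hlt | hge
    · -- K is left of k
      rcases Nat.lt_or_ge (i.val+1) j.val with hgap | hadj
      · rcases Nat.lt_or_ge a.val j.val with haj | haj
        · -- move k left
          refine ⟨bv i ⟨j.val-1, by omega⟩ (Fin.ne_of_val_ne (by simp; omega)).symm,
            Or.inr ⟨rfl, Or.inr (by simp; omega), Fin.ne_of_val_ne (by simp; omega)⟩,
            fun hh => hh, ?_⟩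
          show DKf a.val i.val (j.val-1) + 1 = DKf a.val i.val j.val
          unfold DKf; split_ifs <;> omega
        · -- move K right
          refine ⟨bv ⟨i.val+1, by omega⟩ j (Fin.ne_of_val_ne (by simp; omega)),
            Or.inl ⟨Or.inl (by simp), rfl, Fin.ne_of_val_ne (by simp; omega)⟩,
            fun hh => hh, ?_⟩
          show DKf a.val (i.val+1) j.val + 1 = DKf a.val i.val j.val
          unfold DKf; split_ifs <;> omega
      · -- adjacent: capture
        refine ⟨KV j, ⟨Or.inl (by omega), rfl⟩, fun hh => hh, ?_⟩
        show nd a.val j.val + 1 = DKf a.val i.val j.val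
        unfold nd DKf; split_ifs <;> omega
    · -- k is left of K
      have hgt : j.val < i.val := by omega
      rcases Nat.lt_or_ge (j.val+1) i.val with hgap | hadj
      · rcases Nat.lt_or_ge j.val a.val with haj' | haj
        · -- move k right
          refine ⟨bv i ⟨j.val+1, by omega⟩ (Fin.ne_of_val_ne (by simp; omega)).symm,
            Or.inr ⟨rfl, Or.inl (by simp), Fin.ne_of_val_ne (by simp; omega)⟩,
            fun hh => hh, ?_⟩
          show DKf a.val i.val (j.val+1) + 1 = DKf a.val i.val j.val
          unfold DKf; split_ifs <;> omega
        · -- move K left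
          refine ⟨bv ⟨i.val-1, by omega⟩ j (Fin.ne_of_val_ne (by simp; omega)),
            Or.inl ⟨Or.inr (by simp; omega), rfl, Fin.ne_of_val_ne (by simp; omega)⟩,
            fun hh => hh, ?_⟩
          show DKf a.val (i.val-1) j.val + 1 = DKf a.val i.val j.val
          unfold DKf; split_ifs <;> omega
      · -- adjacent: capture
        refine ⟨KV j, ⟨Or.inr (by omega), rfl⟩, fun hh => hh, ?_⟩
        show nd a.val j.val + 1 = DKf a.val i.val j.val
        unfold nd DKf; split_ifs <;> omega

theorem DK_walk (a : Fin n) : ∀ m (u : KingV n), ¬ IsOk u.1 → DKval a u = m →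
    StepsTo (kingR n) m u (KV a) := by
  intro m
  induction m with
  | zero =>
    rintro ⟨p, hp⟩ hu h0
    cases p with
    | onlyK b =>
      have hb : b = a := Fin.ext (nd_eq_zero h0).symm
      subst hb
      exact rfl
    | both i j =>
      exact absurd h0 (by
        have h1 : (1:ℕ) ≤ DKf a.val i.val j.val := DKf_pos (vne hp)
        have h2 : DKval a ⟨.both i j, hp⟩ = DKf a.val i.val j.val := rfl
        omega)
    | onlyk b => exact (hu trivial).elim
  | succ k ih =>
    intro u hu h
    have hne : u ≠ KV a := by
      intro hh; rw [hh] at h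
      have : DKval a (KV a) = 0 := nd_self a.val
      omega
    obtain ⟨w, hmove, hwk, hval⟩ := DK_dec a u hu hne
    exact ⟨w, hmove, ih w hwk (by omega)⟩

theorem DK_low (a : Fin n) : ∀ m (u : KingV n), StepsTo (kingR n) m u (KV a) →
    DKval a u ≤ m := by
  intro m
  induction m with
  | zero =>
    intro u h
    have h' : u = KV a := h
    rw [h']
    exact Nat.le_of_eq (nd_self a.val)
  | succ k ih =>
    intro u h
    obtain ⟨w, hw, hs⟩ : ∃ w, kingR n u w ∧ StepsTo (kingR n) k w (KV a) := h
    have hwk : ¬ IsOk w.1 := fun hOk =>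
      (stepsTo_closed closed_IsOk k w (KV a) hs hOk : IsOk (KV a : KingV n).1)
    have h1 := DK_lip a hw hwk
    have h2 := ih w hs
    omega

theorem ddist_to_KV (a : Fin n) (u : KingV n) (hu : ¬ IsOk u.1) :
    ddist (kingR n) u (KV a) = DKval a u :=
  ddist_eq (DK_walk a _ u hu rfl) (fun k hk => DK_low a k u hk)

def sigP : KingPos n → KingPos n
  | .both i j => .both j i
  | .onlyK a => .onlyk a
  | .onlyk a => .onlyK a

theorem sigP_valid : ∀ p : KingPos n, p.valid → (sigP p).valid
  | .both _ _, h => Ne.symm h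
  | .onlyK _, _ => trivial
  | .onlyk _, _ => trivial

def sigv (u : KingV n) : KingV n := ⟨sigP u.1, sigP_valid u.1 u.2⟩

theorem sig_sig (u : KingV n) : sigv (sigv u) = u := by
  obtain ⟨p, hp⟩ := u; cases p <;> rfl

theorem kingR_sig {u v : KingV n} (h : kingR n u v) : kingR n (sigv u) (sigv v) := by
  obtain ⟨p, hp⟩ := u; obtain ⟨q, hq⟩ := v
  cases p with
  | both i j =>
    cases q with
    | both i2 j2 =>
      rcases h with ⟨h1, h2, h3⟩ | ⟨h1, h2, h3⟩
      · exact Or.inr ⟨h2, h1, h3⟩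
      · exact Or.inl ⟨h2, h1, h3⟩
    | onlyK m => exact ⟨h.1.symm, h.2⟩
    | onlyk m => exact ⟨h.1.symm, h.2⟩
  | onlyK b => cases q <;> first | exact h.elim | exact h
  | onlyk b => cases q <;> first | exact h.elim | exact h

theorem stepsTo_sig : ∀ m (u v : KingV n), StepsTo (kingR n) m u v →
    StepsTo (kingR n) m (sigv u) (sigv v) := by
  intro m
  induction m with
  | zero => intro u v h; have h' : u = v := h; rw [h']; rfl
  | succ k ih =>
    intro u v h
    obtain ⟨w, hw, hs⟩ : ∃ w, kingR n u w ∧ StepsTo (kingR n) k w v := h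
    exact ⟨sigv w, kingR_sig hw, ih w v hs⟩

theorem ddist_sig (u v : KingV n) :
    ddist (kingR n) (sigv u) (sigv v) = ddist (kingR n) u v := by
  have hset : {m : ℕ | StepsTo (kingR n) m (sigv u) (sigv v)} =
      {m : ℕ | StepsTo (kingR n) m u v} := by
    ext m
    constructor
    · intro h
      have := stepsTo_sig m _ _ h
      rwa [sig_sig, sig_sig] at this
    · exact fun h => stepsTo_sig m u v h
  rw [ddist, ddist, hset]

theorem sig_not_isOk {u : KingV n} (hu : ¬ IsK u.1) : ¬ IsOk (sigv u).1 := by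
  obtain ⟨p, hp⟩ := u
  cases p with
  | both i j => exact fun hh => hh
  | onlyK b => exact fun hh => hu trivial
  | onlyk b => exact fun hh => hh

theorem ddist_to_kv (a : Fin n) (u : KingV n) (hu : ¬ IsK u.1) :
    ddist (kingR n) u (kv a) = DKval a (sigv u) := by
  have h1 : (sigv (kv a : KingV n)) = KV a := rfl
  rw [← ddist_sig u (kv a), h1]
  exact ddist_to_KV a (sigv u) (sig_not_isOk hu)

theorem ddist_KV_KV (a b : Fin n) : ddist (kingR n) (KV a) (KV b) = (nd a.val b.val : ℕ) := by
  rw [ddist_to_KV b (KV a) (fun h => h)]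
  have : DKval b (KV a) = nd b.val a.val := rfl
  rw [this, nd_comm]

theorem sd_KK (a b : Fin n) :
    sdist (kingR n) (KV a) (KV b) = ((nd a.val b.val : ℤ) : WithTop ℤ) :=
  sdist_eq_coe (ddist_KV_KV a b)
    (by rw [ddist_KV_KV a b, ddist_KV_KV b a, nd_comm])

theorem sd_Kk (a b : Fin n) : sdist (kingR n) (KV a) (kv b) = ⊤ :=
  sdist_top2 (noPath closed_IsK trivial (fun h => h)) (noPath closed_IsOk trivial (fun h => h))

theorem sd_kK (a b : Fin n) : sdist (kingR n) (kv a) (KV b) = ⊤ :=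
  sdist_top2 (noPath closed_IsOk trivial (fun h => h)) (noPath closed_IsK trivial (fun h => h))

theorem sd_kk (a b : Fin n) :
    sdist (kingR n) (kv a) (kv b) = ((nd a.val b.val : ℤ) : WithTop ℤ) := by
  have hd : ∀ x y : Fin n, ddist (kingR n) (kv x) (kv y) = (nd x.val y.val : ℕ) := by
    intro x y
    rw [ddist_to_kv y (kv x) (fun h => h)]
    have : DKval y (sigv (kv x)) = nd y.val x.val := rfl
    rw [this, nd_comm]
  exact sdist_eq_coe (hd a b) (by rw [hd a b, hd b a, nd_comm])

theorem sd_KB (a : Fin n) {i j : Fin n} (h : i ≠ j) :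
    sdist (kingR n) (KV a) (bv i j h) = (((-(DKf a.val i.val j.val : ℤ)) : ℤ) : WithTop ℤ) := by
  refine sdist_eq_neg (noPath closed_IsLone trivial (fun hh => hh)) ?_
  rw [ddist_to_KV a (bv i j h) (fun hh => hh)]
  rfl

theorem sd_kB (a : Fin n) {i j : Fin n} (h : i ≠ j) :
    sdist (kingR n) (kv a) (bv i j h) = (((-(DKf a.val j.val i.val : ℤ)) : ℤ) : WithTop ℤ) := by
  refine sdist_eq_neg (noPath closed_IsLone trivial (fun hh => hh)) ?_
  rw [ddist_to_kv a (bv i j h) (fun hh => hh)]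
  rfl

theorem sd_BK {p q : Fin n} (h : p ≠ q) (b : Fin n) :
    sdist (kingR n) (bv p q h) (KV b) = ((DKf b.val p.val q.val : ℤ) : WithTop ℤ) := by
  refine sdist_eq_coe ?_ ?_
  · rw [ddist_to_KV b (bv p q h) (fun hh => hh)]; rfl
  · have htop : ddist (kingR n) (KV b) (bv p q h) = ⊤ :=
      noPath closed_IsLone (u := KV b) (v := bv p q h) trivial (fun hh => hh)
    rw [htop]; exact le_top

theorem sd_Bk {p q : Fin n} (h : p ≠ q) (b : Fin n) :
    sdist (kingR n) (bv p q h) (kv b) = ((DKf b.val q.val p.val : ℤ) : WithTop ℤ) := by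
  refine sdist_eq_coe ?_ ?_
  · rw [ddist_to_kv b (bv p q h) (fun hh => hh)]; rfl
  · have htop : ddist (kingR n) (kv b) (bv p q h) = ⊤ :=
      noPath closed_IsLone (u := kv b) (v := bv p q h) trivial (fun hh => hh)
    rw [htop]; exact le_top

theorem sdBB_LR {p q p' q' : Fin n} (h : p ≠ q) (h' : p' ≠ q')
    (h1 : p.val < q.val) (h2 : q'.val < p'.val) :
    sdist (kingR n) (bv p q h) (bv p' q' h') = ⊤ :=
  sdist_top2 (noPath closed_LoL h1 (fun hh => by have : p'.val < q'.val := hh; omega))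
    (noPath closed_RoL h2 (fun hh => by have : q.val < p.val := hh; omega))

theorem sdBB_RL {p q p' q' : Fin n} (h : p ≠ q) (h' : p' ≠ q')
    (h1 : q.val < p.val) (h2 : p'.val < q'.val) :
    sdist (kingR n) (bv p q h) (bv p' q' h') = ⊤ :=
  sdist_top2 (noPath closed_RoL h1 (fun hh => by have : q'.val < p'.val := hh; omega))
    (noPath closed_LoL h2 (fun hh => by have : p.val < q.val := hh; omega))

theorem sd_sigv (u v : KingV n) :
    sdist (kingR n) (sigv u) (sigv v) = sdist (kingR n) u v := by
  unfold sdist; rw [ddist_sig, ddist_sig]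

theorem KV_ne_KV {a b : Fin n} (h : a.val ≠ b.val) : (KV a : KingV n) ≠ KV b := by
  intro hh
  have h2 := congrArg Subtype.val hh
  injection h2 with h3
  exact h (congrArg Fin.val h3)

theorem kv_ne_kv {a b : Fin n} (h : a.val ≠ b.val) : (kv a : KingV n) ≠ kv b := by
  intro hh
  have h2 := congrArg Subtype.val hh
  injection h2 with h3
  exact h (congrArg Fin.val h3)

theorem KV_ne_kv (a b : Fin n) : (KV a : KingV n) ≠ kv b := by
  intro hh
  have h2 := congrArg Subtype.val hh
  injection h2

theorem bv_ne_bv {i j i' j' : Fin n} {h : i ≠ j} {h' : i' ≠ j'}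
    (hne : i.val ≠ i'.val ∨ j.val ≠ j'.val) : bv i j h ≠ bv i' j' h' := by
  intro hh
  have h2 := congrArg Subtype.val hh
  injection h2 with h3 h4
  rcases hne with hne | hne
  · exact hne (congrArg Fin.val h3)
  · exact hne (congrArg Fin.val h4)

theorem posEq {x y : ℕ} (h : x = y) : (((x:ℤ)) : WithTop ℤ) = ((y:ℤ) : WithTop ℤ) := by rw [h]

theorem negEq {x y : ℕ} (h : x = y) :
    (((-(x:ℤ)) : ℤ) : WithTop ℤ) = (((-(y:ℤ)) : ℤ) : WithTop ℤ) := by rw [h]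

theorem unCoe {x y : ℕ} (h : ((x:ℤ) : WithTop ℤ) = ((y:ℤ) : WithTop ℤ)) : x = y := by
  have h2 : (x:ℤ) = (y:ℤ) := by exact_mod_cast h
  omega

theorem unNeg {x y : ℕ} (h : (((-(x:ℤ)) : ℤ) : WithTop ℤ) = (((-(y:ℤ)) : ℤ) : WithTop ℤ)) :
    x = y := by
  have h2 : (-(x:ℤ)) = (-(y:ℤ)) := by exact_mod_cast h
  omega

theorem unMix {x y : ℕ} (h : ((x:ℤ) : WithTop ℤ) = (((-(y:ℤ)) : ℤ) : WithTop ℤ)) :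
    x = 0 ∧ y = 0 := by
  have h2 : (x:ℤ) = (-(y:ℤ)) := by exact_mod_cast h
  omega

theorem unTop {x : ℤ} (h : ((x : ℤ) : WithTop ℤ) = ⊤) : False := WithTop.coe_ne_top h

theorem bothInj {n i j i' j' : ℕ} (hn : 4 ≤ n) (hi : i < n) (hj : j < n) (hi' : i' < n)
    (hj' : j' < n) (hij : i ≠ j) (hij' : i' ≠ j')
    (e1 : DKf 0 i j = DKf 0 i' j') (e2 : DKf 0 j i = DKf 0 j' i')
    (e3 : DKf (n-1) i j = DKf (n-1) i' j') : i = i' ∧ j = j' := by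
  rw [DKf0_eq hij, DKf0_eq hij'] at e1
  rw [DKf0_eq (Ne.symm hij), DKf0_eq (Ne.symm hij')] at e2
  rw [DKflast_eq hij hi hj, DKflast_eq hij' hi' hj'] at e3
  split_ifs at e1 e2 e3 <;> omega

theorem resolves3' (hn : 4 ≤ n) (a c : Fin n) (ha : a.val = 0) (hc : c.val = n-1) :
    Resolves (kingR n) ({KV a, kv a, KV c} : Set (KingV n)) := by
  intro u v huv
  have h1 := huv (KV a) (by simp)
  have h2 := huv (kv a) (by simp)
  have h3 := huv (KV c) (by simp)
  obtain ⟨p, hp⟩ := u; obtain ⟨q, hq⟩ := v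
  cases p with
  | both i j =>
    have hij := vne hp
    cases q with
    | both i' j' =>
      have hij' := vne hq
      have e1 : sdist (kingR n) (KV a) (bv i j hp) = sdist (kingR n) (KV a) (bv i' j' hq) := h1
      have e2 : sdist (kingR n) (kv a) (bv i j hp) = sdist (kingR n) (kv a) (bv i' j' hq) := h2
      have e3 : sdist (kingR n) (KV c) (bv i j hp) = sdist (kingR n) (KV c) (bv i' j' hq) := h3
      rw [sd_KB a hp, sd_KB a hq] at e1
      rw [sd_kB a hp, sd_kB a hq] at e2
      rw [sd_KB c hp, sd_KB c hq] at e3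
      have f1 := unNeg e1
      have f2 := unNeg e2
      have f3 := unNeg e3
      rw [ha] at f1 f2
      rw [hc] at f3
      obtain ⟨g1, g2⟩ := bothInj hn i.isLt j.isLt i'.isLt j'.isLt hij hij' f1 f2 f3
      have : i = i' := Fin.ext g1
      subst this
      have : j = j' := Fin.ext g2
      subst this
      rfl
    | onlyK b =>
      have e1 : sdist (kingR n) (KV a) (bv i j hp) = sdist (kingR n) (KV a) (KV b) := h1
      rw [sd_KB a hp, sd_KK] at e1
      have := unMix e1.symm
      have := DKf_pos (a := a.val) hij
      omega
    | onlyk b =>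
      have e1 : sdist (kingR n) (KV a) (bv i j hp) = sdist (kingR n) (KV a) (kv b) := h1
      rw [sd_KB a hp, sd_Kk] at e1
      exact (unTop e1).elim
  | onlyK b =>
    cases q with
    | both i' j' =>
      have hij' := vne hq
      have e1 : sdist (kingR n) (KV a) (KV b) = sdist (kingR n) (KV a) (bv i' j' hq) := h1
      rw [sd_KB a hq, sd_KK] at e1
      have := unMix e1
      have := DKf_pos (a := a.val) hij'
      omega
    | onlyK b' =>
      have e1 : sdist (kingR n) (KV a) (KV b) = sdist (kingR n) (KV a) (KV b') := h1
      rw [sd_KK, sd_KK] at e1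
      have f1 := unCoe e1
      have : b = b' := by
        apply Fin.ext
        unfold nd at f1; split_ifs at f1 <;> omega
      subst this
      rfl
    | onlyk b' =>
      have e1 : sdist (kingR n) (KV a) (KV b) = sdist (kingR n) (KV a) (kv b') := h1
      rw [sd_KK, sd_Kk] at e1
      exact (unTop e1).elim
  | onlyk b =>
    cases q with
    | both i' j' =>
      have e2 : sdist (kingR n) (kv a) (kv b) = sdist (kingR n) (kv a) (bv i' j' hq) := h2
      rw [sd_kB a hq, sd_kk] at e2
      have := unMix e2
      have := DKf_pos (a := a.val) (Ne.symm (vne hq))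
      omega
    | onlyK b' =>
      have e1 : sdist (kingR n) (KV a) (kv b) = sdist (kingR n) (KV a) (KV b') := h1
      rw [sd_Kk, sd_KK] at e1
      exact (unTop e1.symm).elim
    | onlyk b' =>
      have e2 : sdist (kingR n) (kv a) (kv b) = sdist (kingR n) (kv a) (kv b') := h2
      rw [sd_kk, sd_kk] at e2
      have f1 := unCoe e2
      have : b = b' := by
        apply Fin.ext
        unfold nd at f1; split_ifs at f1 <;> omega
      subst this
      rfl

theorem mKk (hn : 4 ≤ n) (a c : Fin n) :
    ∃ u v : KingV n, u ≠ v ∧ sdist (kingR n) (KV a) u = sdist (kingR n) (KV a) v ∧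
      sdist (kingR n) (kv c) u = sdist (kingR n) (kv c) v := by
  have ha' := a.isLt; have hc' := c.isLt
  obtain ⟨x0, hx0⟩ : ∃ x : Fin n, x.val = 0 := ⟨⟨0, by omega⟩, rfl⟩
  obtain ⟨x1, hx1⟩ : ∃ x : Fin n, x.val = 1 := ⟨⟨1, by omega⟩, rfl⟩
  obtain ⟨x2, hx2⟩ : ∃ x : Fin n, x.val = 2 := ⟨⟨2, by omega⟩, rfl⟩
  obtain ⟨x3, hx3⟩ : ∃ x : Fin n, x.val = 3 := ⟨⟨3, by omega⟩, rfl⟩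
  by_cases hA : 1 ≤ a.val ∧ a.val ≤ n-2
  · obtain ⟨am, ham⟩ : ∃ x : Fin n, x.val = a.val - 1 := ⟨⟨a.val-1, by omega⟩, rfl⟩
    obtain ⟨ap, hap⟩ : ∃ x : Fin n, x.val = a.val + 1 := ⟨⟨a.val+1, by omega⟩, rfl⟩
    refine ⟨KV am, KV ap, KV_ne_KV (by omega), ?_, ?_⟩
    · rw [sd_KK, sd_KK]; exact posEq (by unfold nd; split_ifs <;> omega)
    · rw [sd_kK, sd_kK]
  · by_cases hC : 1 ≤ c.val ∧ c.val ≤ n-2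
    · obtain ⟨cm, hcm⟩ : ∃ x : Fin n, x.val = c.val - 1 := ⟨⟨c.val-1, by omega⟩, rfl⟩
      obtain ⟨cp, hcp⟩ : ∃ x : Fin n, x.val = c.val + 1 := ⟨⟨c.val+1, by omega⟩, rfl⟩
      refine ⟨kv cm, kv cp, kv_ne_kv (by omega), ?_, ?_⟩
      · rw [sd_Kk, sd_Kk]
      · rw [sd_kk, sd_kk]; exact posEq (by unfold nd; split_ifs <;> omega)
    · have ha : a.val = 0 ∨ a.val = n-1 := by omega
      have hc : c.val = 0 ∨ c.val = n-1 := by omega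
      rcases ha with ha | ha <;> rcases hc with hc | hc
      · have n1 : x0 ≠ x2 := Fin.ne_of_val_ne (by omega)
        have n2 : x1 ≠ x2 := Fin.ne_of_val_ne (by omega)
        refine ⟨bv x0 x2 n1, bv x1 x2 n2, bv_ne_bv (Or.inl (by omega)), ?_, ?_⟩
        · rw [sd_KB a n1, sd_KB a n2]; exact negEq (by unfold DKf; split_ifs <;> omega)
        · rw [sd_kB c n1, sd_kB c n2]; exact negEq (by unfold DKf; split_ifs <;> omega)
      · have n1 : x3 ≠ x0 := Fin.ne_of_val_ne (by omega)
        have n2 : x1 ≠ x2 := Fin.ne_of_val_ne (by omega)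
        refine ⟨bv x3 x0 n1, bv x1 x2 n2, bv_ne_bv (Or.inl (by omega)), ?_, ?_⟩
        · rw [sd_KB a n1, sd_KB a n2]; exact negEq (by unfold DKf; split_ifs <;> omega)
        · rw [sd_kB c n1, sd_kB c n2]; exact negEq (by unfold DKf; split_ifs <;> omega)
      · have n1 : x0 ≠ x3 := Fin.ne_of_val_ne (by omega)
        have n2 : x2 ≠ x1 := Fin.ne_of_val_ne (by omega)
        refine ⟨bv x0 x3 n1, bv x2 x1 n2, bv_ne_bv (Or.inl (by omega)), ?_, ?_⟩
        · rw [sd_KB a n1, sd_KB a n2]; exact negEq (by unfold DKf; split_ifs <;> omega)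
        · rw [sd_kB c n1, sd_kB c n2]; exact negEq (by unfold DKf; split_ifs <;> omega)
      · have n1 : x0 ≠ x1 := Fin.ne_of_val_ne (by omega)
        have n2 : x0 ≠ x2 := Fin.ne_of_val_ne (by omega)
        refine ⟨bv x0 x1 n1, bv x0 x2 n2, bv_ne_bv (Or.inr (by omega)), ?_, ?_⟩
        · rw [sd_KB a n1, sd_KB a n2]; exact negEq (by unfold DKf; split_ifs <;> omega)
        · rw [sd_kB c n1, sd_kB c n2]; exact negEq (by unfold DKf; split_ifs <;> omega)

theorem mKB (hn : 4 ≤ n) (a p q : Fin n) (hpq : p ≠ q) :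
    ∃ u v : KingV n, u ≠ v ∧ sdist (kingR n) (KV a) u = sdist (kingR n) (KV a) v ∧
      sdist (kingR n) (bv p q hpq) u = sdist (kingR n) (bv p q hpq) v := by
  have ha' := a.isLt; have hp' := p.isLt; have hq' := q.isLt
  have hpq' := vne hpq
  obtain ⟨x0, hx0⟩ : ∃ x : Fin n, x.val = 0 := ⟨⟨0, by omega⟩, rfl⟩
  obtain ⟨x1, hx1⟩ : ∃ x : Fin n, x.val = 1 := ⟨⟨1, by omega⟩, rfl⟩
  obtain ⟨x2, hx2⟩ : ∃ x : Fin n, x.val = 2 := ⟨⟨2, by omega⟩, rfl⟩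
  obtain ⟨xl, hxl⟩ : ∃ x : Fin n, x.val = n-1 := ⟨⟨n-1, by omega⟩, rfl⟩
  rcases Nat.lt_or_ge p.val q.val with hL | hR'
  · -- K-left landmark t
    by_cases hexc : p.val = 0 ∧ q.val = 1
    · -- t = (0,1) : collision for s in the right-order both class
      rcases Nat.lt_or_ge a.val (n-2) with haa | haa
      · obtain ⟨ap, hap⟩ : ∃ x : Fin n, x.val = a.val + 1 := ⟨⟨a.val+1, by omega⟩, rfl⟩
        have n1 : xl ≠ a := Fin.ne_of_val_ne (by omega)
        have n2 : xl ≠ ap := Fin.ne_of_val_ne (by omega)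
        refine ⟨bv xl a n1, bv xl ap n2, bv_ne_bv (Or.inr (by omega)), ?_, ?_⟩
        · rw [sd_KB a n1, sd_KB a n2]; exact negEq (by unfold DKf; split_ifs <;> omega)
        · rw [sdBB_LR hpq n1 (by omega) (by omega), sdBB_LR hpq n2 (by omega) (by omega)]
      · have n1 : x1 ≠ x0 := Fin.ne_of_val_ne (by omega)
        have n2 : x2 ≠ x0 := Fin.ne_of_val_ne (by omega)
        refine ⟨bv x1 x0 n1, bv x2 x0 n2, bv_ne_bv (Or.inl (by omega)), ?_, ?_⟩
        · rw [sd_KB a n1, sd_KB a n2]; exact negEq (by unfold DKf; split_ifs <;> omega)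
        · rw [sdBB_LR hpq n1 (by omega) (by omega), sdBB_LR hpq n2 (by omega) (by omega)]
    · -- generic K-left t : collision on the lone-k line
      rcases Nat.lt_or_ge (p.val+1) q.val with hgap | hadj
      · obtain ⟨pp, hpp⟩ : ∃ x : Fin n, x.val = p.val + 1 := ⟨⟨p.val+1, by omega⟩, rfl⟩
        refine ⟨kv p, kv pp, kv_ne_kv (by omega), ?_, ?_⟩
        · rw [sd_Kk, sd_Kk]
        · rw [sd_Bk hpq p, sd_Bk hpq pp]; exact posEq (by unfold DKf; split_ifs <;> omega)
      · -- q = p+1 and p ≥ 1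
        have hp1 : 1 ≤ p.val := by omega
        obtain ⟨pm, hpm⟩ : ∃ x : Fin n, x.val = p.val - 1 := ⟨⟨p.val-1, by omega⟩, rfl⟩
        refine ⟨kv pm, kv q, kv_ne_kv (by omega), ?_, ?_⟩
        · rw [sd_Kk, sd_Kk]
        · rw [sd_Bk hpq pm, sd_Bk hpq q]; exact posEq (by unfold DKf; split_ifs <;> omega)
  · -- K-right landmark t
    have hR : q.val < p.val := by omega
    by_cases hexc : p.val = n-1 ∧ q.val = n-2
    · rcases Nat.lt_or_ge a.val (n-2) with haa | haa
      · obtain ⟨ap, hap⟩ : ∃ x : Fin n, x.val = a.val + 1 := ⟨⟨a.val+1, by omega⟩, rfl⟩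
        have n1 : a ≠ xl := Fin.ne_of_val_ne (by omega)
        have n2 : ap ≠ xl := Fin.ne_of_val_ne (by omega)
        refine ⟨bv a xl n1, bv ap xl n2, bv_ne_bv (Or.inl (by omega)), ?_, ?_⟩
        · rw [sd_KB a n1, sd_KB a n2]; exact negEq (by unfold DKf; split_ifs <;> omega)
        · rw [sdBB_RL hpq n1 (by omega) (by omega), sdBB_RL hpq n2 (by omega) (by omega)]
      · have n1 : x0 ≠ a := Fin.ne_of_val_ne (by omega)
        have n2 : x0 ≠ x1 := Fin.ne_of_val_ne (by omega)
        refine ⟨bv x0 a n1, bv x0 x1 n2, bv_ne_bv (Or.inr (by omega)), ?_, ?_⟩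
        · rw [sd_KB a n1, sd_KB a n2]; exact negEq (by unfold DKf; split_ifs <;> omega)
        · rw [sdBB_RL hpq n1 (by omega) (by omega), sdBB_RL hpq n2 (by omega) (by omega)]
    · rcases Nat.lt_or_ge (q.val+1) p.val with hgap | hadj
      · obtain ⟨q1, hq1⟩ : ∃ x : Fin n, x.val = q.val + 1 := ⟨⟨q.val+1, by omega⟩, rfl⟩
        obtain ⟨q2, hq2⟩ : ∃ x : Fin n, x.val = q.val + 2 := ⟨⟨q.val+2, by omega⟩, rfl⟩
        refine ⟨kv q1, kv q2, kv_ne_kv (by omega), ?_, ?_⟩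
        · rw [sd_Kk, sd_Kk]
        · rw [sd_Bk hpq q1, sd_Bk hpq q2]; exact posEq (by unfold DKf; split_ifs <;> omega)
      · -- p = q+1 and p ≤ n-2
        have hple : p.val ≤ n-2 := by omega
        obtain ⟨p1, hp1⟩ : ∃ x : Fin n, x.val = p.val + 1 := ⟨⟨p.val+1, by omega⟩, rfl⟩
        refine ⟨kv q, kv p1, kv_ne_kv (by omega), ?_, ?_⟩
        · rw [sd_Kk, sd_Kk]
        · rw [sd_Bk hpq q, sd_Bk hpq p1]; exact posEq (by unfold DKf; split_ifs <;> omega)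

theorem transport (s t : KingV n)
    (h : ∃ u v : KingV n, u ≠ v ∧ sdist (kingR n) s u = sdist (kingR n) s v ∧
      sdist (kingR n) t u = sdist (kingR n) t v) :
    ∃ u v : KingV n, u ≠ v ∧ sdist (kingR n) (sigv s) u = sdist (kingR n) (sigv s) v ∧
      sdist (kingR n) (sigv t) u = sdist (kingR n) (sigv t) v := by
  obtain ⟨u, v, hne, h1, h2⟩ := h
  refine ⟨sigv u, sigv v, fun hh => hne (by rw [← sig_sig u, hh, sig_sig]), ?_, ?_⟩
  · rw [sd_sigv s u, sd_sigv s v]; exact h1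
  · rw [sd_sigv t u, sd_sigv t v]; exact h2

theorem mkB (hn : 4 ≤ n) (a p q : Fin n) (hpq : p ≠ q) :
    ∃ u v : KingV n, u ≠ v ∧ sdist (kingR n) (kv a) u = sdist (kingR n) (kv a) v ∧
      sdist (kingR n) (bv p q hpq) u = sdist (kingR n) (bv p q hpq) v :=
  transport (KV a) (bv q p (Ne.symm hpq)) (mKB hn a q p (Ne.symm hpq))

theorem mBB_LR (hn : 4 ≤ n) (p q p' q' : Fin n) (hpq : p ≠ q) (hpq' : p' ≠ q')
    (hL : p.val < q.val) (hR : q'.val < p'.val) :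
    ∃ u v : KingV n, u ≠ v ∧
      sdist (kingR n) (bv p q hpq) u = sdist (kingR n) (bv p q hpq) v ∧
      sdist (kingR n) (bv p' q' hpq') u = sdist (kingR n) (bv p' q' hpq') v := by
  have hp' := p.isLt; have hq' := q.isLt
  rcases Nat.lt_or_ge (p.val+1) q.val with hgap | hadj
  · -- unit neighbours (p+1, q) and (p, q-1)
    obtain ⟨pp, hpp⟩ : ∃ x : Fin n, x.val = p.val + 1 := ⟨⟨p.val+1, by omega⟩, rfl⟩
    obtain ⟨qm, hqm⟩ : ∃ x : Fin n, x.val = q.val - 1 := ⟨⟨q.val-1, by omega⟩, rfl⟩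
    have n1 : pp ≠ q := Fin.ne_of_val_ne (by omega)
    have n2 : p ≠ qm := Fin.ne_of_val_ne (by omega)
    have r1 : kingR n (bv p q hpq) (bv pp q n1) :=
      Or.inl ⟨Or.inl (by omega), rfl, Fin.ne_of_val_ne (by omega)⟩
    have r2 : kingR n (bv pp q n1) (bv p q hpq) :=
      Or.inl ⟨Or.inr (by omega), rfl, Fin.ne_of_val_ne (by omega)⟩
    have r3 : kingR n (bv p q hpq) (bv p qm n2) :=
      Or.inr ⟨rfl, Or.inr (by omega), Fin.ne_of_val_ne (by omega)⟩
    have r4 : kingR n (bv p qm n2) (bv p q hpq) :=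
      Or.inr ⟨rfl, Or.inl (by omega), Fin.ne_of_val_ne (by omega)⟩
    refine ⟨bv pp q n1, bv p qm n2, bv_ne_bv (Or.inl (by omega)), ?_, ?_⟩
    · rw [sdist_one r1 r2 (bv_ne_bv (Or.inl (by omega))),
        sdist_one r3 r4 (bv_ne_bv (Or.inr (by omega)))]
    · rw [sdBB_RL hpq' n1 hR (by omega), sdBB_RL hpq' n2 hR (by omega)]
  · -- q = p+1
    by_cases hc1 : p.val = 0
    · -- s = (0,1) : use (1,2) and (0,3) at distance two
      obtain ⟨x1, hx1⟩ : ∃ x : Fin n, x.val = 1 := ⟨⟨1, by omega⟩, rfl⟩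
      obtain ⟨x2, hx2⟩ : ∃ x : Fin n, x.val = 2 := ⟨⟨2, by omega⟩, rfl⟩
      obtain ⟨x3, hx3⟩ : ∃ x : Fin n, x.val = 3 := ⟨⟨3, by omega⟩, rfl⟩
      have n1 : x1 ≠ x2 := Fin.ne_of_val_ne (by omega)
      have n2 : p ≠ x3 := Fin.ne_of_val_ne (by omega)
      have nm : p ≠ x2 := Fin.ne_of_val_ne (by omega)
      have s1 : kingR n (bv p q hpq) (bv p x2 nm) :=
        Or.inr ⟨rfl, Or.inl (by omega), Fin.ne_of_val_ne (by omega)⟩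
      have s2 : kingR n (bv p x2 nm) (bv x1 x2 n1) :=
        Or.inl ⟨Or.inl (by omega), rfl, Fin.ne_of_val_ne (by omega)⟩
      have s3 : kingR n (bv x1 x2 n1) (bv p x2 nm) :=
        Or.inl ⟨Or.inr (by omega), rfl, Fin.ne_of_val_ne (by omega)⟩
      have s4 : kingR n (bv p x2 nm) (bv p q hpq) :=
        Or.inr ⟨rfl, Or.inr (by omega), Fin.ne_of_val_ne (by omega)⟩
      have s5 : kingR n (bv p x2 nm) (bv p x3 n2) :=
        Or.inr ⟨rfl, Or.inl (by omega), Fin.ne_of_val_ne (by omega)⟩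
      have s6 : kingR n (bv p x3 n2) (bv p x2 nm) :=
        Or.inr ⟨rfl, Or.inr (by omega), Fin.ne_of_val_ne (by omega)⟩
      have w1 : StepsTo (kingR n) 2 (bv p q hpq) (bv x1 x2 n1) := ⟨_, s1, _, s2, rfl⟩
      have w2 : StepsTo (kingR n) 2 (bv x1 x2 n1) (bv p q hpq) := ⟨_, s3, _, s4, rfl⟩
      have w3 : StepsTo (kingR n) 2 (bv p q hpq) (bv p x3 n2) := ⟨_, s1, _, s5, rfl⟩
      have w4 : StepsTo (kingR n) 2 (bv p x3 n2) (bv p q hpq) := ⟨_, s6, _, s4, rfl⟩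
      have m1 : ¬ kingR n (bv p q hpq) (bv x1 x2 n1) := by
        rintro (⟨-, h2, -⟩ | ⟨h1, -, -⟩)
        · exact absurd (congrArg Fin.val h2) (by omega)
        · exact absurd (congrArg Fin.val h1) (by omega)
      have m2 : ¬ kingR n (bv x1 x2 n1) (bv p q hpq) := by
        rintro (⟨-, h2, -⟩ | ⟨h1, -, -⟩)
        · exact absurd (congrArg Fin.val h2) (by omega)
        · exact absurd (congrArg Fin.val h1) (by omega)
      have m3 : ¬ kingR n (bv p q hpq) (bv p x3 n2) := by
        rintro (⟨-, h2, -⟩ | ⟨-, h2, -⟩)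
        · exact absurd (congrArg Fin.val h2) (by omega)
        · rcases h2 with h2 | h2 <;> omega
      have m4 : ¬ kingR n (bv p x3 n2) (bv p q hpq) := by
        rintro (⟨-, h2, -⟩ | ⟨-, h2, -⟩)
        · exact absurd (congrArg Fin.val h2) (by omega)
        · rcases h2 with h2 | h2 <;> omega
      refine ⟨bv x1 x2 n1, bv p x3 n2, bv_ne_bv (Or.inl (by omega)), ?_, ?_⟩
      · rw [sdist_two w1 w2 (bv_ne_bv (Or.inl (by omega))) m1 m2,
          sdist_two w3 w4 (bv_ne_bv (Or.inr (by omega))) m3 m4]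
      · rw [sdBB_RL hpq' n1 hR (by omega), sdBB_RL hpq' n2 hR (by omega)]
    · by_cases hc2 : q.val = n-1
      · -- s = (n-2, n-1) : use (n-3, n-2) and (n-4, n-1) at distance two
        obtain ⟨xn3, hxn3⟩ : ∃ x : Fin n, x.val = n-3 := ⟨⟨n-3, by omega⟩, rfl⟩
        obtain ⟨xn2, hxn2⟩ : ∃ x : Fin n, x.val = n-2 := ⟨⟨n-2, by omega⟩, rfl⟩
        obtain ⟨xn4, hxn4⟩ : ∃ x : Fin n, x.val = n-4 := ⟨⟨n-4, by omega⟩, rfl⟩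
        have nm : xn3 ≠ q := Fin.ne_of_val_ne (by omega)
        have n1 : xn3 ≠ xn2 := Fin.ne_of_val_ne (by omega)
        have n2 : xn4 ≠ q := Fin.ne_of_val_ne (by omega)
        have s1 : kingR n (bv p q hpq) (bv xn3 q nm) :=
          Or.inl ⟨Or.inr (by omega), rfl, Fin.ne_of_val_ne (by omega)⟩
        have s2 : kingR n (bv xn3 q nm) (bv xn3 xn2 n1) :=
          Or.inr ⟨rfl, Or.inr (by omega), Fin.ne_of_val_ne (by omega)⟩
        have s3 : kingR n (bv xn3 xn2 n1) (bv xn3 q nm) :=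
          Or.inr ⟨rfl, Or.inl (by omega), Fin.ne_of_val_ne (by omega)⟩
        have s4 : kingR n (bv xn3 q nm) (bv p q hpq) :=
          Or.inl ⟨Or.inl (by omega), rfl, Fin.ne_of_val_ne (by omega)⟩
        have s5 : kingR n (bv xn3 q nm) (bv xn4 q n2) :=
          Or.inl ⟨Or.inr (by omega), rfl, Fin.ne_of_val_ne (by omega)⟩
        have s6 : kingR n (bv xn4 q n2) (bv xn3 q nm) :=
          Or.inl ⟨Or.inl (by omega), rfl, Fin.ne_of_val_ne (by omega)⟩
        have w1 : StepsTo (kingR n) 2 (bv p q hpq) (bv xn3 xn2 n1) := ⟨_, s1, _, s2, rfl⟩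
        have w2 : StepsTo (kingR n) 2 (bv xn3 xn2 n1) (bv p q hpq) := ⟨_, s3, _, s4, rfl⟩
        have w3 : StepsTo (kingR n) 2 (bv p q hpq) (bv xn4 q n2) := ⟨_, s1, _, s5, rfl⟩
        have w4 : StepsTo (kingR n) 2 (bv xn4 q n2) (bv p q hpq) := ⟨_, s6, _, s4, rfl⟩
        have m1 : ¬ kingR n (bv p q hpq) (bv xn3 xn2 n1) := by
          rintro (⟨-, h2, -⟩ | ⟨h1, -, -⟩)
          · exact absurd (congrArg Fin.val h2) (by omega)
          · exact absurd (congrArg Fin.val h1) (by omega)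
        have m2 : ¬ kingR n (bv xn3 xn2 n1) (bv p q hpq) := by
          rintro (⟨-, h2, -⟩ | ⟨h1, -, -⟩)
          · exact absurd (congrArg Fin.val h2) (by omega)
          · exact absurd (congrArg Fin.val h1) (by omega)
        have m3 : ¬ kingR n (bv p q hpq) (bv xn4 q n2) := by
          rintro (⟨h1, -, -⟩ | ⟨h1, -, -⟩)
          · rcases h1 with h1 | h1 <;> omega
          · exact absurd (congrArg Fin.val h1) (by omega)
        have m4 : ¬ kingR n (bv xn4 q n2) (bv p q hpq) := by
          rintro (⟨h1, -, -⟩ | ⟨h1, -, -⟩)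
          · rcases h1 with h1 | h1 <;> omega
          · exact absurd (congrArg Fin.val h1) (by omega)
        refine ⟨bv xn3 xn2 n1, bv xn4 q n2, bv_ne_bv (Or.inl (by omega)), ?_, ?_⟩
        · rw [sdist_two w1 w2 (bv_ne_bv (Or.inl (by omega))) m1 m2,
            sdist_two w3 w4 (bv_ne_bv (Or.inl (by omega))) m3 m4]
        · rw [sdBB_RL hpq' n1 hR (by omega), sdBB_RL hpq' n2 hR (by omega)]
      · -- 1 ≤ p and q ≤ n-2: unit neighbours (p-1, q) and (p, q+1)
        obtain ⟨pm, hpm⟩ : ∃ x : Fin n, x.val = p.val - 1 := ⟨⟨p.val-1, by omega⟩, rfl⟩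
        obtain ⟨qp, hqp⟩ : ∃ x : Fin n, x.val = q.val + 1 := ⟨⟨q.val+1, by omega⟩, rfl⟩
        have n1 : pm ≠ q := Fin.ne_of_val_ne (by omega)
        have n2 : p ≠ qp := Fin.ne_of_val_ne (by omega)
        have r1 : kingR n (bv p q hpq) (bv pm q n1) :=
          Or.inl ⟨Or.inr (by omega), rfl, Fin.ne_of_val_ne (by omega)⟩
        have r2 : kingR n (bv pm q n1) (bv p q hpq) :=
          Or.inl ⟨Or.inl (by omega), rfl, Fin.ne_of_val_ne (by omega)⟩
        have r3 : kingR n (bv p q hpq) (bv p qp n2) :=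
          Or.inr ⟨rfl, Or.inl (by omega), Fin.ne_of_val_ne (by omega)⟩
        have r4 : kingR n (bv p qp n2) (bv p q hpq) :=
          Or.inr ⟨rfl, Or.inr (by omega), Fin.ne_of_val_ne (by omega)⟩
        refine ⟨bv pm q n1, bv p qp n2, bv_ne_bv (Or.inl (by omega)), ?_, ?_⟩
        · rw [sdist_one r1 r2 (bv_ne_bv (Or.inl (by omega))),
            sdist_one r3 r4 (bv_ne_bv (Or.inr (by omega)))]
        · rw [sdBB_RL hpq' n1 hR (by omega), sdBB_RL hpq' n2 hR (by omega)]

theorem mBB (hn : 4 ≤ n) (p q p' q' : Fin n) (hpq : p ≠ q) (hpq' : p' ≠ q') :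
    ∃ u v : KingV n, u ≠ v ∧
      sdist (kingR n) (bv p q hpq) u = sdist (kingR n) (bv p q hpq) v ∧
      sdist (kingR n) (bv p' q' hpq') u = sdist (kingR n) (bv p' q' hpq') v := by
  have hv := vne hpq; have hv' := vne hpq'
  obtain ⟨x0, hx0⟩ : ∃ x : Fin n, x.val = 0 := ⟨⟨0, by omega⟩, rfl⟩
  obtain ⟨x1, hx1⟩ : ∃ x : Fin n, x.val = 1 := ⟨⟨1, by omega⟩, rfl⟩
  obtain ⟨x2, hx2⟩ : ∃ x : Fin n, x.val = 2 := ⟨⟨2, by omega⟩, rfl⟩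
  rcases Nat.lt_or_ge p.val q.val with hL | hR1 <;>
    rcases Nat.lt_or_ge p'.val q'.val with hL' | hR2
  · -- both K-left: any two K-right vertices are unreachable both ways
    have n1 : x1 ≠ x0 := Fin.ne_of_val_ne (by omega)
    have n2 : x2 ≠ x0 := Fin.ne_of_val_ne (by omega)
    refine ⟨bv x1 x0 n1, bv x2 x0 n2, bv_ne_bv (Or.inl (by omega)), ?_, ?_⟩
    · rw [sdBB_LR hpq n1 hL (by omega), sdBB_LR hpq n2 hL (by omega)]
    · rw [sdBB_LR hpq' n1 hL' (by omega), sdBB_LR hpq' n2 hL' (by omega)]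
  · exact mBB_LR hn p q p' q' hpq hpq' hL (by omega)
  · exact transport (bv q p (Ne.symm hpq)) (bv q' p' (Ne.symm hpq'))
      (mBB_LR hn q p q' p' (Ne.symm hpq) (Ne.symm hpq') (by omega) (by omega))
  · -- both K-right
    have n1 : x0 ≠ x1 := Fin.ne_of_val_ne (by omega)
    have n2 : x0 ≠ x2 := Fin.ne_of_val_ne (by omega)
    refine ⟨bv x0 x1 n1, bv x0 x2 n2, bv_ne_bv (Or.inr (by omega)), ?_, ?_⟩
    · rw [sdBB_RL hpq n1 (by omega) (by omega), sdBB_RL hpq n2 (by omega) (by omega)]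
    · rw [sdBB_RL hpq' n1 (by omega) (by omega), sdBB_RL hpq' n2 (by omega) (by omega)]

instance : DecidableEq (KingV n) := Subtype.instDecidableEq

theorem KingV_cases (u : KingV n) :
    (∃ a, u = KV a) ∨ (∃ a, u = kv a) ∨ (∃ i j h, u = bv i j h) := by
  obtain ⟨p, hp⟩ := u
  cases p with
  | both i j => exact Or.inr (Or.inr ⟨i, j, hp, rfl⟩)
  | onlyK a => exact Or.inl ⟨a, rfl⟩
  | onlyk a => exact Or.inr (Or.inl ⟨a, rfl⟩)

theorem master (hn : 4 ≤ n) (s t : KingV n) :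
    ∃ u v : KingV n, u ≠ v ∧ sdist (kingR n) s u = sdist (kingR n) s v ∧
      sdist (kingR n) t u = sdist (kingR n) t v := by
  obtain ⟨x0, hx0⟩ : ∃ x : Fin n, x.val = 0 := ⟨⟨0, by omega⟩, rfl⟩
  obtain ⟨x1, hx1⟩ : ∃ x : Fin n, x.val = 1 := ⟨⟨1, by omega⟩, rfl⟩
  rcases KingV_cases s with ⟨a, rfl⟩ | ⟨a, rfl⟩ | ⟨i, j, hij, rfl⟩ <;>
    rcases KingV_cases t with ⟨b, rfl⟩ | ⟨b, rfl⟩ | ⟨i', j', hij', rfl⟩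
  · exact ⟨kv x0, kv x1, kv_ne_kv (by omega),
      by rw [sd_Kk, sd_Kk], by rw [sd_Kk, sd_Kk]⟩
  · exact mKk hn a b
  · exact mKB hn a i' j' hij'
  · obtain ⟨u, v, hne, h1, h2⟩ := mKk hn b a
    exact ⟨u, v, hne, h2, h1⟩
  · exact ⟨KV x0, KV x1, KV_ne_KV (by omega),
      by rw [sd_kK, sd_kK], by rw [sd_kK, sd_kK]⟩
  · exact mkB hn a i' j' hij'
  · obtain ⟨u, v, hne, h1, h2⟩ := mKB hn b i j hij
    exact ⟨u, v, hne, h2, h1⟩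
  · obtain ⟨u, v, hne, h1, h2⟩ := mkB hn b i j hij
    exact ⟨u, v, hne, h2, h1⟩
  · exact mBB hn i j i' j' hij hij'

theorem noTwo (hn : 4 ≤ n) (S : Finset (KingV n)) (hS : S.card ≤ 2) :
    ¬ Resolves (kingR n) ↑S := by
  intro hres
  obtain ⟨s, t, hcov⟩ : ∃ s t : KingV n, ∀ x ∈ S, x = s ∨ x = t := by
    have h2 : S.card = 0 ∨ S.card = 1 ∨ S.card = 2 := by omega
    rcases h2 with hc | hc | hc
    · have hS0 := Finset.card_eq_zero.mp hc
      exact ⟨KV ⟨0, by omega⟩, KV ⟨0, by omega⟩,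
        fun x hx => (Finset.notMem_empty x (hS0 ▸ hx)).elim⟩
    · obtain ⟨s, hs⟩ := Finset.card_eq_one.mp hc
      exact ⟨s, s, fun x hx => Or.inl (by rwa [hs, Finset.mem_singleton] at hx)⟩
    · obtain ⟨s, t, hst, hS2⟩ := Finset.card_eq_two.mp hc
      exact ⟨s, t, fun x hx => by rwa [hS2, Finset.mem_insert, Finset.mem_singleton] at hx⟩
  obtain ⟨u, v, hne, h1, h2⟩ := master hn s t
  apply hne
  apply hres
  intro x hx
  rcases hcov x (Finset.mem_coe.mp hx) with rfl | rfl
  · exact h1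
  · exact h2

end KP

/-- for every `n ≥ 4`, the opposing-kings game digraph `G(K(1,n))` has
metric dimension 3 with respect to signed distance; in particular no set of two
vertices resolves it. -/
theorem stmt18 (n : ℕ) (hn : 4 ≤ n) :
    metricDim (kingR n) = 3 ∧
    (∀ S : Finset (KingV n), S.card = 2 → ¬ Resolves (kingR n) ↑S) := by
  have main : ∀ S : Finset (KingV n), S.card = 2 → ¬ Resolves (kingR n) ↑S :=
    fun S h => KP.noTwo hn S (by omega)
  refine ⟨?_, main⟩
  have hmem : 3 ∈ {k : ℕ | ∃ S : Finset (KingV n), S.card = k ∧ Resolves (kingR n) ↑S} := by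
    refine ⟨{KP.KV ⟨0, by omega⟩, KP.kv ⟨0, by omega⟩, KP.KV ⟨n-1, by omega⟩}, ?_, ?_⟩
    · rw [Finset.card_insert_of_notMem, Finset.card_insert_of_notMem,
        Finset.card_singleton]
      · simp only [Finset.mem_singleton]
        exact fun h => by have h2 := congrArg Subtype.val h; injection h2
      · simp only [Finset.mem_insert, Finset.mem_singleton]
        push_neg
        exact ⟨KP.KV_ne_kv _ _, KP.KV_ne_KV (by show (0:ℕ) ≠ n-1; omega)⟩
    · have hcoe : (↑({KP.KV ⟨0, by omega⟩, KP.kv ⟨0, by omega⟩, KP.KV ⟨n-1, by omega⟩} :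
          Finset (KingV n)) : Set (KingV n)) =
          {KP.KV ⟨0, by omega⟩, KP.kv ⟨0, by omega⟩, KP.KV ⟨n-1, by omega⟩} := by
        simp
      rw [hcoe]
      exact KP.resolves3' hn _ _ rfl rfl
  apply le_antisymm
  · exact Nat.sInf_le hmem
  · apply le_csInf ⟨3, hmem⟩
    intro k hk
    by_contra hlt
    push_neg at hlt
    obtain ⟨S, hcard, hres⟩ := hk
    exact KP.noTwo hn S (by omega) hres
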